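/- arXiv:1406.7872 — 2 statements merged into one kernel-verified Lean document; each statement's English description precedes it below -/
import Mathlib

section
/- Han's inequality: For a random vector (X₁,…,Xₙ) of finitely-valued random variables with n ≥ 2, (n-1)·H(X₁,…,Xₙ) ≤ Σᵢ₌₁ⁿ H(X₁,…,X_{i-1},X_{i+1},…,Xₙ). -/
open Finset

/-- The probability that the random variable `X` takes value `x`, under the
probability mass function `μ` on the finite sample space `Ω`. -/
noncomputable def prOf {Ω α : Type*} [Fintype Ω] [DecidableEq α]
    (μ : Ω → ℝ) (X : Ω → α) (x : α) : ℝ :=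
  ∑ ω ∈ Finset.univ.filter (fun ω => X ω = x), μ ω

/-- The Shannon entropy (base-2) of the random variable `X`. -/
noncomputable def H2 {Ω α : Type*} [Fintype Ω] [Fintype α] [DecidableEq α]
    (μ : Ω → ℝ) (X : Ω → α) : ℝ :=
  ∑ x : α, -(prOf μ X x * Real.logb 2 (prOf μ X x))

/-- The conditional Shannon entropy `H(X|Y)`. -/
noncomputable def condH2 {Ω α β : Type*} [Fintype Ω] [Fintype α] [Fintype β]
    [DecidableEq α] [DecidableEq β] (μ : Ω → ℝ) (X : Ω → α) (Y : Ω → β) : ℝ :=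
  ∑ y : β, prOf μ Y y * ∑ x : α,
    -((prOf μ (fun ω => (X ω, Y ω)) (x, y) / prOf μ Y y) *
      Real.logb 2 (prOf μ (fun ω => (X ω, Y ω)) (x, y) / prOf μ Y y))

/-!
Write `p` for the joint law of `X = (X₁, …, Xₙ)`. The law of `X` with its `i`-th coordinate
dropped, evaluated at the restriction of `x`, is `lineSum p i x = ∑ₜ p (x with xᵢ := t)`.
The discrete Loomis–Whitney inequality (Mathlib's Gagliardo–Nirenberg lemma for counting measures)
says that `g x = ∏ᵢ (lineSum p i x) ^ (1/(n-1))` has total mass at most `1`, so Gibbs' inequality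
gives `∑ₓ p x log g x ≤ ∑ₓ p x log p x`. Multiplying by `n - 1`, the left side is
`∑ᵢ ∑ₓ p x log (lineSum p i x) = -∑ᵢ H(X without Xᵢ)`, which is Han's inequality.
-/

open MeasureTheory Real
open scoped ENNReal

section LineSum

variable {ι : Type*} [DecidableEq ι] {α : ι → Type*} [∀ i, Fintype (α i)]

def lineSum {M : Type*} [AddCommMonoid M] (f : (∀ i, α i) → M) (i : ι) (x : ∀ i, α i) : M :=
  ∑ t, f (Function.update x i t)

theorem lineSum_nonneg {f : (∀ i, α i) → ℝ} (hf : ∀ x, 0 ≤ f x) (i : ι) (x : ∀ i, α i) :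
    0 ≤ lineSum f i x :=
  sum_nonneg fun _ _ => hf _

theorem le_lineSum {f : (∀ i, α i) → ℝ} (hf : ∀ x, 0 ≤ f x) (i : ι) (x : ∀ i, α i) :
    f x ≤ lineSum f i x := by
  simpa only [lineSum, Function.update_eq_self] using
    single_le_sum (fun t _ => hf (Function.update x i t)) (mem_univ (x i))

theorem ENNReal.sum_prod_lineSum_rpow_le [Fintype ι] {p : ℝ}
    (hp : (Fintype.card ι : ℝ).HolderConjugate p) (f : (∀ i, α i) → ℝ≥0∞) :
    ∑ x, ∏ i, lineSum f i x ^ (1 / (Fintype.card ι - 1 : ℝ)) ≤ (∑ x, f x) ^ p := by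
  let : ∀ i, MeasurableSpace (α i) := fun _ => ⊤
  simpa [lineSum, lintegral_fintype, lintegral_count] using
    lintegral_prod_lintegral_pow_le (fun i => (Measure.count : Measure (α i))) hp
      (measurable_of_countable f)

theorem sum_prod_lineSum_rpow_le [Fintype ι] {p : ℝ}
    (hp : (Fintype.card ι : ℝ).HolderConjugate p) {f : (∀ i, α i) → ℝ} (hf : ∀ x, 0 ≤ f x) :
    ∑ x, ∏ i, lineSum f i x ^ (1 / (Fintype.card ι - 1 : ℝ)) ≤ (∑ x, f x) ^ p := by
  have hr : 0 ≤ 1 / (Fintype.card ι - 1 : ℝ) := one_div_nonneg.2 hp.sub_one_pos.le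
  rw [← ENNReal.ofReal_le_ofReal_iff (rpow_nonneg (sum_nonneg fun x _ => hf x) p),
    ← ENNReal.ofReal_rpow_of_nonneg (sum_nonneg fun x _ => hf x) hp.symm.nonneg,
    ENNReal.ofReal_sum_of_nonneg fun x _ => prod_nonneg fun i _ =>
      rpow_nonneg (lineSum_nonneg hf i x) _,
    ENNReal.ofReal_sum_of_nonneg fun x _ => hf x]
  convert ENNReal.sum_prod_lineSum_rpow_le hp (fun x => ENNReal.ofReal (f x)) using 2 with x
  rw [ENNReal.ofReal_prod_of_nonneg fun i _ => rpow_nonneg (lineSum_nonneg hf i x) _]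
  refine prod_congr rfl fun i _ => ?_
  rw [← ENNReal.ofReal_rpow_of_nonneg (lineSum_nonneg hf i x) hr, lineSum, lineSum,
    ENNReal.ofReal_sum_of_nonneg fun t _ => hf _]

theorem sum_filter_restrict_eq_lineSum [Fintype ι] [∀ i, DecidableEq (α i)] {M : Type*}
    [AddCommMonoid M]
    (f : (∀ j, α j) → M) (i : ι) (x : ∀ j, α j) :
    ∑ y with (fun j : {j // j ≠ i} => y j) = (fun j : {j // j ≠ i} => x j), f y =
      lineSum f i x := by
  have hfiber :
      ({y | (fun j : {j // j ≠ i} => y j) = (fun j : {j // j ≠ i} => x j)} : Finset _) =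
        univ.image (Function.update x i) := by
    ext y
    simp only [mem_filter, mem_univ, true_and, mem_image]
    constructor
    · intro h
      refine ⟨y i, funext fun j => ?_⟩
      rcases eq_or_ne j i with rfl | hj
      · simp
      · simp [hj, congrFun h ⟨j, hj⟩]
    · rintro ⟨t, rfl⟩
      funext j
      simp [j.2]
  rw [hfiber, sum_image fun s _ t _ h => Function.update_injective x i h, lineSum]

end LineSum

section Gibbs

variable {ι : Type*} [Fintype ι] {p g : ι → ℝ}

theorem sum_mul_log_le_sum_mul_log (hp : ∀ x, 0 ≤ p x) (hg : ∀ x, 0 ≤ g x)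
    (hpg : ∀ x, 0 < p x → 0 < g x) (hsum : ∑ x, g x ≤ ∑ x, p x) :
    ∑ x, p x * log (g x) ≤ ∑ x, p x * log (p x) := by
  have hterm : ∀ x, p x * log (g x) - p x * log (p x) ≤ g x - p x := by
    intro x
    rcases (hp x).eq_or_lt with hx | hx
    · simp [← hx, hg x]
    · have hgx := hpg x hx
      have := log_le_sub_one_of_pos (div_pos hgx hx)
      rw [log_div hgx.ne' hx.ne'] at this
      calc p x * log (g x) - p x * log (p x) = p x * (log (g x) - log (p x)) := by ring
        _ ≤ p x * (g x / p x - 1) := mul_le_mul_of_nonneg_left this hx.le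
        _ = g x - p x := by rw [mul_sub, mul_div_cancel₀ _ hx.ne', mul_one]
  have := sum_le_sum fun x (_ : x ∈ univ) => hterm x
  rw [sum_sub_distrib, sum_sub_distrib] at this
  linarith

theorem sum_mul_logb_le_sum_mul_logb {b : ℝ} (hb : 1 < b) (hp : ∀ x, 0 ≤ p x)
    (hg : ∀ x, 0 ≤ g x) (hpg : ∀ x, 0 < p x → 0 < g x) (hsum : ∑ x, g x ≤ ∑ x, p x) :
    ∑ x, p x * logb b (g x) ≤ ∑ x, p x * logb b (p x) := by
  simp only [logb, mul_div_assoc', ← sum_div]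
  exact div_le_div_of_nonneg_right (sum_mul_log_le_sum_mul_log hp hg hpg hsum) (log_pos hb).le

end Gibbs

theorem sum_logb_eq_mul_logb_prod_rpow {ι : Type*} {s : Finset ι} {a : ι → ℝ} {r : ℝ} (b : ℝ)
    (hr : r ≠ 0) (ha : ∀ i ∈ s, 0 < a i) :
    ∑ i ∈ s, logb b (a i) = r * logb b (∏ i ∈ s, a i ^ (1 / r)) := by
  rw [logb_prod _ _ fun i hi => (rpow_pos_of_pos (ha i hi) _).ne', mul_sum]
  refine sum_congr rfl fun i hi => ?_
  rw [logb_rpow_eq_mul_logb_of_pos (ha i hi)]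
  field_simp

theorem sum_mul_sum_logb_lineSum_le {ι : Type*} [Fintype ι] [DecidableEq ι] {α : ι → Type*}
    [∀ i, Fintype (α i)] (hι : 1 < Fintype.card ι) {b : ℝ} (hb : 1 < b)
    {p : (∀ i, α i) → ℝ} (hp : ∀ x, 0 ≤ p x) (hp1 : ∑ x, p x = 1) :
    ∑ x, p x * ∑ i, logb b (lineSum p i x) ≤ (Fintype.card ι - 1) * ∑ x, p x * logb b (p x) := by
  set r : ℝ := Fintype.card ι - 1
  have hr : 0 < r := by simp only [r, sub_pos]; exact_mod_cast hι
  set g : (∀ i, α i) → ℝ := fun x => ∏ i, lineSum p i x ^ (1 / r)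
  have hg : ∀ x, 0 ≤ g x := fun x =>
    prod_nonneg fun i _ => rpow_nonneg (lineSum_nonneg hp i x) _
  have hg1 : ∑ x, g x ≤ 1 := by
    have := sum_prod_lineSum_rpow_le (HolderConjugate.conjExponent
      (by exact_mod_cast hι : (1 : ℝ) < Fintype.card ι)) hp
    rwa [hp1, one_rpow] at this
  have hpos : ∀ x, 0 < p x → ∀ i, 0 < lineSum p i x := fun x hx i =>
    hx.trans_le (le_lineSum hp i x)
  have hlog : ∀ x, p x * ∑ i, logb b (lineSum p i x) = r * (p x * logb b (g x)) := by
    intro x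
    rcases (hp x).eq_or_lt with hx | hx
    · simp [← hx]
    · rw [sum_logb_eq_mul_logb_prod_rpow b hr.ne' fun i _ => hpos x hx i]
      ring
  calc ∑ x, p x * ∑ i, logb b (lineSum p i x) = r * ∑ x, p x * logb b (g x) := by
        simp_rw [hlog, mul_sum]
    _ ≤ r * ∑ x, p x * logb b (p x) := by
        refine mul_le_mul_of_nonneg_left (sum_mul_logb_le_sum_mul_logb hb hp hg ?_ ?_) hr.le
        · exact fun x hx => prod_pos fun i _ => rpow_pos_of_pos (hpos x hx i) _
        · rwa [hp1]

section Entropy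

variable {Ω α β : Type*} [Fintype Ω] [DecidableEq α] [DecidableEq β]

theorem prOf_nonneg {μ : Ω → ℝ} (hμ : ∀ ω, 0 ≤ μ ω) (X : Ω → α) (x : α) : 0 ≤ prOf μ X x :=
  sum_nonneg fun ω _ => hμ ω

theorem sum_prOf [Fintype α] (μ : Ω → ℝ) (X : Ω → α) : ∑ x, prOf μ X x = ∑ ω, μ ω :=
  sum_fiberwise _ _ _

theorem prOf_comp [Fintype α] (μ : Ω → ℝ) (F : Ω → α) (φ : α → β) (b : β) :
    prOf μ (fun ω => φ (F ω)) b = ∑ a with φ a = b, prOf μ F a := by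
  rw [prOf, ← sum_fiberwise_of_maps_to (g := F) (t := {a | φ a = b}) (by simp)]
  refine sum_congr rfl fun a ha => sum_congr ?_ fun _ _ => rfl
  ext ω
  grind

theorem H2_comp [Fintype α] [Fintype β] (μ : Ω → ℝ) (F : Ω → α) (φ : α → β) :
    H2 μ (fun ω => φ (F ω)) =
      -∑ a, prOf μ F a * Real.logb 2 (prOf μ (fun ω => φ (F ω)) (φ a)) := by
  rw [H2, sum_neg_distrib, neg_inj,
    ← sum_fiberwise univ φ fun a => prOf μ F a * Real.logb 2 (prOf μ (fun ω => φ (F ω)) (φ a))]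
  refine sum_congr rfl fun b _ => ?_
  nth_rw 1 [prOf_comp]
  rw [sum_mul]
  refine sum_congr rfl fun a ha => ?_
  rw [(mem_filter.1 ha).2]

theorem H2_restrict_eq {ι : Type*} [Fintype ι] [DecidableEq ι] {α : ι → Type*}
    [∀ i, Fintype (α i)] [∀ i, DecidableEq (α i)] (μ : Ω → ℝ) (X : ∀ i, Ω → α i) (i : ι) :
    H2 μ (fun ω => fun j : {j // j ≠ i} => X j ω) =
      -∑ x, prOf μ (fun ω j => X j ω) x * logb 2 (lineSum (prOf μ (fun ω j => X j ω)) i x) := by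
  rw [H2_comp μ (fun ω j => X j ω) (fun x (j : {j // j ≠ i}) => x j)]
  congr 1
  refine sum_congr rfl fun x _ => ?_
  rw [prOf_comp μ (fun ω j => X j ω) (fun x (j : {j // j ≠ i}) => x j),
    sum_filter_restrict_eq_lineSum]

end Entropy

/-- Han's inequality: `(n-1)·H(X₁,…,Xₙ) ≤ Σᵢ H(X₁,…,X_{i-1},X_{i+1},…,Xₙ)`. -/
theorem han_inequality {Ω : Type*} [Fintype Ω] {n : ℕ} (hn : 2 ≤ n)
    {α : Fin n → Type*} [∀ i, Fintype (α i)] [∀ i, DecidableEq (α i)]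
    (μ : Ω → ℝ) (hnn : ∀ ω, 0 ≤ μ ω) (hsum : ∑ ω, μ ω = 1)
    (X : ∀ i, Ω → α i) :
    ((n : ℝ) - 1) * H2 μ (fun ω => fun i => X i ω) ≤
      ∑ i : Fin n, H2 μ (fun ω => fun j : {j : Fin n // j ≠ i} => X j ω) := by
  have hp1 : ∑ x, prOf μ (fun ω i => X i ω) x = 1 := (sum_prOf μ _).trans hsum
  have han := sum_mul_sum_logb_lineSum_le (by rw [Fintype.card_fin]; omega) one_lt_two
    (prOf_nonneg hnn _) hp1
  rw [Fintype.card_fin] at han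
  simp_rw [H2_restrict_eq, H2]
  simp only [sum_neg_distrib, mul_neg, neg_le_neg_iff]
  rw [sum_comm]
  simpa only [mul_sum] using han
end

section
/- Let 𝓖 be a family of graphs on vertex set {1,…,n} (identified with their edge sets, as subsets of the edge set of Kₙ) such that for every G₁, G₂ ∈ 𝓖, the intersection G₁ ∩ G₂ contains a triangle. Then |𝓖| ≤ 2^{C(n,2) - 2}. -/
/-!
For `S ⊆ V` let `F_S` be the edge set of the graph that is complete on `S` and on `Sᶜ`. Two of
the three vertices of a triangle lie on the same side of `S`, so the traces of the edge sets of
the family on `F_S` form an intersecting family of subsets of `F_S`, of size at most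
`2 ^ (|F_S| - 1)`. Every edge lies in exactly `2 ^ (n - 1)` of the `2 ^ n` sets `F_S`, so
Shearer's lemma gives
`|𝒢| ^ 2 ^ (n - 1) ≤ ∏_S 2 ^ (|F_S| - 1) = 2 ^ ((C(n,2) - 2) 2 ^ (n - 1))`.
-/

open Finset
open scoped NNReal

namespace NNReal

variable {ι : Type*}

theorem prod_le_arith_mean_pow (s : Finset ι) (z : ι → ℝ≥0) :
    ∏ i ∈ s, z i ≤ ((∑ i ∈ s, z i) / #s) ^ #s := by
  rcases s.eq_empty_or_nonempty with rfl | hs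
  · simp
  have hs₀ : #s ≠ 0 := hs.card_pos.ne'
  have hw : ∑ _i ∈ s, (#s : ℝ≥0)⁻¹ = 1 := by simp [hs₀]
  calc ∏ i ∈ s, z i = (∏ i ∈ s, z i ^ (((#s : ℝ≥0)⁻¹ : ℝ≥0) : ℝ)) ^ #s := by
        rw [← prod_pow]
        push_cast
        simp only [rpow_inv_natCast_pow _ hs₀]
    _ ≤ (∑ i ∈ s, (#s : ℝ≥0)⁻¹ * z i) ^ #s :=
        pow_le_pow_left₀ zero_le (geom_mean_le_arith_mean_weighted s _ z hw) _
    _ = ((∑ i ∈ s, z i) / #s) ^ #s := by rw [← mul_sum, inv_mul_eq_div]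

theorem prod_le_prod_mul_mean_div_pow {I S : Finset ι} (hSI : S ⊆ I) {k : ℕ} (hkS : k ≤ #S)
    {δ γ : ι → ℝ≥0} (hδγ : ∀ i ∈ I, δ i ≤ γ i) :
    ∏ i ∈ I, δ i ≤ (∏ i ∈ I, γ i) * ((∑ i ∈ S, δ i / γ i) / #S) ^ k := by
  have hle_one : ∀ i ∈ I, δ i / γ i ≤ 1 := fun i hi => div_le_one_of_le₀ (hδγ i hi) zero_le
  have hmean : (∑ i ∈ S, δ i / γ i) / #S ≤ 1 := by
    refine div_le_one_of_le₀ ?_ zero_le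
    simpa using sum_le_sum fun i hi => hle_one i (hSI hi)
  calc ∏ i ∈ I, δ i = (∏ i ∈ I, γ i) * ∏ i ∈ I, δ i / γ i := by
        rw [← prod_mul_distrib]
        refine prod_congr rfl fun i hi => ?_
        -- `δ i / γ i = 0` when `γ i = 0`, but then `δ i = 0` as well
        rcases eq_or_ne (γ i) 0 with h | h
        · simpa [h] using hδγ i hi
        · rw [mul_div_cancel₀ _ h]
    _ ≤ (∏ i ∈ I, γ i) * ∏ i ∈ S, δ i / γ i :=
        mul_le_mul_right (prod_le_prod_of_subset_of_le_one hSI (fun _ _ => zero_le)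
          fun i hi _ => hle_one i hi) _
    _ ≤ (∏ i ∈ I, γ i) * ((∑ i ∈ S, δ i / γ i) / #S) ^ #S :=
        mul_le_mul_right (prod_le_arith_mean_pow S _) _
    _ ≤ _ := mul_le_mul_right (pow_le_pow_of_le_one zero_le hmean hkS) _

/-- Superadditivity of the geometric mean. -/
theorem add_pow_le_prod_of_pow_le_prod {I S : Finset ι} (hSI : S ⊆ I) {k : ℕ} (hk : k ≠ 0)
    (hkS : k ≤ #S) {α β γ : ι → ℝ≥0} (hαγ : ∀ i ∈ I, α i ≤ γ i) (hβγ : ∀ i ∈ I, β i ≤ γ i)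
    (hαβγ : ∀ i ∈ S, α i + β i ≤ γ i) {x y : ℝ≥0} (hx : x ^ k ≤ ∏ i ∈ I, α i)
    (hy : y ^ k ≤ ∏ i ∈ I, β i) :
    (x + y) ^ k ≤ ∏ i ∈ I, γ i := by
  set ρ := (∏ i ∈ I, γ i) ^ (k⁻¹ : ℝ)
  have hρ : ρ ^ k = ∏ i ∈ I, γ i := rpow_inv_natCast_pow _ hk
  set U := (∑ i ∈ S, α i / γ i) / #S
  set V := (∑ i ∈ S, β i / γ i) / #S
  have hUV : U + V ≤ 1 := by
    rw [← add_div, ← sum_add_distrib]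
    refine div_le_one_of_le₀ ?_ zero_le
    simpa [← add_div] using sum_le_sum fun i hi => div_le_one_of_le₀ (hαβγ i hi) zero_le
  have hxU : x ≤ ρ * U := (pow_le_pow_iff_left₀ zero_le zero_le hk).1 <| by
    rw [mul_pow, hρ]; exact hx.trans (prod_le_prod_mul_mean_div_pow hSI hkS hαγ)
  have hyV : y ≤ ρ * V := (pow_le_pow_iff_left₀ zero_le zero_le hk).1 <| by
    rw [mul_pow, hρ]; exact hy.trans (prod_le_prod_mul_mean_div_pow hSI hkS hβγ)
  calc (x + y) ^ k ≤ (ρ * (U + V)) ^ k := by rw [mul_add]; gcongr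
    _ ≤ ρ ^ k := pow_le_pow_left₀ zero_le (mul_le_of_le_one_right zero_le hUV) k
    _ = ∏ i ∈ I, γ i := hρ

end NNReal

namespace Finset

variable {α ι : Type*} [DecidableEq α] {𝒜 ℬ : Finset (Finset α)} {s : Finset α} {a : α}

def trace (𝒜 : Finset (Finset α)) (s : Finset α) : Finset (Finset α) := 𝒜.image (· ∩ s)

theorem trace_subset_powerset : 𝒜.trace s ⊆ s.powerset :=
  image_subset_iff.2 fun _ _ => mem_powerset.2 inter_subset_right

theorem trace_mono (h : 𝒜 ⊆ ℬ) : 𝒜.trace s ⊆ ℬ.trace s := image_subset_image h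

theorem trace_memberSubfamily (ha : a ∈ s) :
    (𝒜.memberSubfamily a).trace s = (𝒜.trace s).memberSubfamily a := by
  ext t
  simp only [trace, mem_memberSubfamily, mem_image]
  constructor
  · rintro ⟨u, ⟨hu, hau⟩, rfl⟩
    exact ⟨⟨insert a u, hu, insert_inter_of_mem ha⟩, fun h => hau (mem_inter.1 h).1⟩
  · rintro ⟨⟨v, hv, hvt⟩, hat⟩
    have hav : a ∈ v := (mem_inter.1 (hvt ▸ mem_insert_self a t)).1
    refine ⟨v.erase a, ⟨by rwa [insert_erase hav], notMem_erase a v⟩, ?_⟩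
    rw [erase_inter, hvt, erase_insert hat]

theorem trace_nonMemberSubfamily (ha : a ∈ s) :
    (𝒜.nonMemberSubfamily a).trace s = (𝒜.trace s).nonMemberSubfamily a := by
  ext t
  simp only [trace, mem_nonMemberSubfamily, mem_image]
  constructor
  · rintro ⟨u, ⟨hu, hau⟩, rfl⟩
    exact ⟨⟨u, hu, rfl⟩, fun h => hau (mem_inter.1 h).1⟩
  · rintro ⟨⟨u, hu, rfl⟩, hau⟩
    exact ⟨u, ⟨hu, fun h => hau (mem_inter.2 ⟨h, ha⟩)⟩, rfl⟩

theorem card_trace_memberSubfamily_le : #((𝒜.memberSubfamily a).trace s) ≤ #(𝒜.trace s) := by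
  have : (𝒜.memberSubfamily a).trace s = ({t ∈ 𝒜 | a ∈ t}.trace s).image (erase · a) := by
    simp only [trace, memberSubfamily, image_image, Function.comp_def, erase_inter]
  rw [this]
  exact card_image_le.trans (card_le_card (trace_mono (filter_subset _ _)))

theorem memberSubfamily_subset_powerset (h𝒜 : 𝒜 ⊆ (insert a s).powerset) :
    𝒜.memberSubfamily a ⊆ s.powerset := fun t ht => by
  rw [mem_memberSubfamily] at ht
  exact mem_powerset.2 ((insert_subset_insert_iff ht.2).1 (mem_powerset.1 (h𝒜 ht.1)))

theorem nonMemberSubfamily_subset_powerset (h𝒜 : 𝒜 ⊆ (insert a s).powerset) :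
    𝒜.nonMemberSubfamily a ⊆ s.powerset := fun t ht => by
  rw [mem_nonMemberSubfamily] at ht
  exact mem_powerset.2 ((subset_insert_iff_of_notMem ht.2).1 (mem_powerset.1 (h𝒜 ht.1)))

/-- Shearer's lemma. -/
theorem card_pow_le_prod_card_trace {I : Finset ι} {F : ι → Finset α} {k : ℕ} (hk : k ≠ 0)
    {U : Finset α} (hcover : ∀ a ∈ U, k ≤ #{i ∈ I | a ∈ F i}) (h𝒜 : 𝒜 ⊆ U.powerset) :
    #𝒜 ^ k ≤ ∏ i ∈ I, #(𝒜.trace (F i)) := by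
  induction U using Finset.induction_on generalizing 𝒜 with
  | empty =>
    rw [powerset_empty, subset_singleton_iff] at h𝒜
    rcases h𝒜 with rfl | rfl <;> simp [trace, hk]
  | @insert a U ha ih =>
    have hcover' : ∀ b ∈ U, k ≤ #{i ∈ I | b ∈ F i} :=
      fun b hb => hcover b (mem_insert_of_mem hb)
    have h₀ := ih hcover' (nonMemberSubfamily_subset_powerset (a := a) h𝒜)
    have h₁ := ih hcover' (memberSubfamily_subset_powerset (a := a) h𝒜)
    have hsplit : ∀ i ∈ {i ∈ I | a ∈ F i},
        #((𝒜.nonMemberSubfamily a).trace (F i)) + #((𝒜.memberSubfamily a).trace (F i))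
          = #(𝒜.trace (F i)) := fun i hi => by
      have hai := (mem_filter.1 hi).2
      rw [trace_nonMemberSubfamily hai, trace_memberSubfamily hai, add_comm,
        card_memberSubfamily_add_card_nonMemberSubfamily]
    rw [← card_memberSubfamily_add_card_nonMemberSubfamily a 𝒜, add_comm]
    have := NNReal.add_pow_le_prod_of_pow_le_prod (filter_subset _ I) hk
      (α := fun i => #((𝒜.nonMemberSubfamily a).trace (F i)))
      (β := fun i => #((𝒜.memberSubfamily a).trace (F i))) (γ := fun i => #(𝒜.trace (F i)))
      (x := #(𝒜.nonMemberSubfamily a)) (y := #(𝒜.memberSubfamily a))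
      (hcover a (mem_insert_self a U))
      (fun i _ => by exact_mod_cast card_le_card (trace_mono (filter_subset _ _)))
      (fun i _ => by exact_mod_cast card_trace_memberSubfamily_le)
      (fun i hi => by exact_mod_cast (hsplit i hi).le)
      (by exact_mod_cast h₀) (by exact_mod_cast h₁)
    exact_mod_cast this

theorem two_mul_card_le_two_pow_card_of_intersecting (h𝒜 : 𝒜 ⊆ s.powerset)
    (hint : (𝒜 : Set (Finset α)).Intersecting) : 2 * #𝒜 ≤ 2 ^ #s := by
  have hinj : Set.InjOn (s \ ·) 𝒜 := fun t ht u hu htu => by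
    rw [← sdiff_sdiff_eq_self (mem_powerset.1 (h𝒜 ht)), ← sdiff_sdiff_eq_self
      (mem_powerset.1 (h𝒜 hu))]
    exact congrArg (s \ ·) htu
  have hdisj : Disjoint 𝒜 (𝒜.image (s \ ·)) := disjoint_right.2 fun t ht htA => by
    obtain ⟨u, hu, rfl⟩ := mem_image.1 ht
    exact hint hu htA disjoint_sdiff_self_right
  calc 2 * #𝒜 = #(𝒜 ∪ 𝒜.image (s \ ·)) := by
        rw [card_union_of_disjoint hdisj, card_image_of_injOn hinj, two_mul]
    _ ≤ #s.powerset :=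
        card_le_card <| union_subset h𝒜 <|
          image_subset_iff.2 fun _ _ => mem_powerset.2 sdiff_subset
    _ = 2 ^ #s := card_powerset s

theorem two_pow_card_mul_card_pow_le {I : Finset ι} {F : ι → Finset α} {U : Finset α} {k : ℕ}
    (hk : k ≠ 0) (hFU : ∀ i ∈ I, F i ⊆ U) (hcover : ∀ a ∈ U, #{i ∈ I | a ∈ F i} = k)
    (h𝒜 : 𝒜 ⊆ U.powerset) (hint : ∀ i ∈ I, (𝒜.trace (F i) : Set (Finset α)).Intersecting) :
    2 ^ #I * #𝒜 ^ k ≤ 2 ^ (#U * k) := by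
  have hsum : ∑ i ∈ I, #(F i) = #U * k := by
    calc ∑ i ∈ I, #(F i) = ∑ i ∈ I, #{a ∈ U | a ∈ F i} := sum_congr rfl fun i hi => by
          rw [filter_mem_eq_inter, inter_eq_right.2 (hFU i hi)]
      _ = ∑ a ∈ U, #{i ∈ I | a ∈ F i} :=
          (sum_card_bipartiteAbove_eq_sum_card_bipartiteBelow (fun a i => a ∈ F i)).symm
      _ = #U * k := by rw [sum_congr rfl hcover, sum_const, smul_eq_mul]
  calc 2 ^ #I * #𝒜 ^ k ≤ 2 ^ #I * ∏ i ∈ I, #(𝒜.trace (F i)) :=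
        Nat.mul_le_mul_left _ (card_pow_le_prod_card_trace hk (fun a ha => (hcover a ha).ge) h𝒜)
    _ = ∏ i ∈ I, 2 * #(𝒜.trace (F i)) := by rw [prod_mul_distrib, prod_const]
    _ ≤ ∏ i ∈ I, 2 ^ #(F i) := prod_le_prod' fun i hi =>
        two_mul_card_le_two_pow_card_of_intersecting trace_subset_powerset (hint i hi)
    _ = 2 ^ (#U * k) := by rw [prod_pow_eq_pow_sum, hsum]

theorem card_filter_mem_iff_mem [Fintype α] {u v : α} (huv : u ≠ v) :
    #{t : Finset α | u ∈ t ↔ v ∈ t} = 2 ^ (Fintype.card α - 1) := by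
  have hflip : #{t : Finset α | u ∈ t ↔ v ∈ t} = #{t : Finset α | ¬(u ∈ t ↔ v ∈ t)} :=
    card_nbij' (symmDiff · {u}) (symmDiff · {u})
      (fun t => by simp [mem_symmDiff, huv.symm]; tauto)
      (fun t => by simp [mem_symmDiff, huv.symm]; tauto)
      (fun t _ => symmDiff_symmDiff_cancel_right _ _)
      (fun t _ => symmDiff_symmDiff_cancel_right _ _)
  have htotal := card_filter_add_card_filter_not (s := (univ : Finset (Finset α)))
    (fun t => u ∈ t ↔ v ∈ t)
  rw [← hflip, card_univ, Fintype.card_finset] at htotal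
  have hcard : Fintype.card α ≠ 0 := (Fintype.card_pos_iff.2 ⟨u⟩).ne'
  rw [← Nat.sub_add_cancel (Nat.one_le_iff_ne_zero.2 hcard), pow_succ] at htotal
  omega

end Finset

namespace SimpleGraph

variable {V : Type*}

def sameSideGraph (S : Finset V) : SimpleGraph V where
  Adj u v := u ≠ v ∧ (u ∈ S ↔ v ∈ S)
  symm := ⟨fun _ _ h => ⟨h.1.symm, h.2.symm⟩⟩
  loopless := ⟨fun _ h => h.1 rfl⟩

@[simp]
theorem sameSideGraph_adj {S : Finset V} {u v : V} :
    (sameSideGraph S).Adj u v ↔ u ≠ v ∧ (u ∈ S ↔ v ∈ S) := Iff.rfl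

instance [DecidableEq V] (S : Finset V) : DecidableRel (sameSideGraph S).Adj :=
  fun _ _ => inferInstanceAs (Decidable (_ ∧ _))

theorem exists_adj_sameSideGraph_of_not_cliqueFree {H : SimpleGraph V} (hH : ¬H.CliqueFree 3)
    (S : Finset V) : ∃ u v, H.Adj u v ∧ (sameSideGraph S).Adj u v := by
  classical
  obtain ⟨t, ht⟩ : ∃ t, H.IsNClique 3 t := by simpa [CliqueFree] using hH
  obtain ⟨a, b, c, hab, hac, hbc, -⟩ := is3Clique_iff.1 ht
  by_cases h₁ : a ∈ S ↔ b ∈ S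
  · exact ⟨a, b, hab, H.ne_of_adj hab, h₁⟩
  by_cases h₂ : a ∈ S ↔ c ∈ S
  · exact ⟨a, c, hac, H.ne_of_adj hac, h₂⟩
  · exact ⟨b, c, hbc, H.ne_of_adj hbc, by tauto⟩

variable [Fintype V] [DecidableEq V]

theorem card_filter_mem_edgeFinset_sameSideGraph {e : Sym2 V}
    (he : e ∈ (⊤ : SimpleGraph V).edgeFinset) :
    #{S : Finset V | e ∈ (sameSideGraph S).edgeFinset} = 2 ^ (Fintype.card V - 1) := by
  induction e using Sym2.ind with
  | h u v =>
    have huv : u ≠ v := by simpa using he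
    simpa [huv] using card_filter_mem_iff_mem huv

open Classical in
theorem intersecting_trace_edgeFinset_sameSideGraph {𝒢 : Finset (SimpleGraph V)}
    (h𝒢 : ∀ G₁ ∈ 𝒢, ∀ G₂ ∈ 𝒢, ¬(G₁ ⊓ G₂).CliqueFree 3) (S : Finset V) :
    ((𝒢.image (·.edgeFinset)).trace (sameSideGraph S).edgeFinset :
      Set (Finset (Sym2 V))).Intersecting := by
  simp only [Set.Intersecting, trace, image_image, coe_image, Set.mem_image, mem_coe]
  rintro _ ⟨G₁, hG₁, rfl⟩ _ ⟨G₂, hG₂, rfl⟩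
  obtain ⟨u, v, ⟨h₁, h₂⟩, hS⟩ :=
    exists_adj_sameSideGraph_of_not_cliqueFree (h𝒢 G₁ hG₁ G₂ hG₂) S
  exact not_disjoint_iff.2 ⟨s(u, v), by simpa [h₁] using hS, by simpa [h₂] using hS⟩

theorem four_mul_card_le_of_forall_not_cliqueFree (𝒢 : Finset (SimpleGraph V))
    (h𝒢 : ∀ G₁ ∈ 𝒢, ∀ G₂ ∈ 𝒢, ¬(G₁ ⊓ G₂).CliqueFree 3) :
    4 * #𝒢 ≤ 2 ^ (Fintype.card V).choose 2 := by
  classical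
  rcases 𝒢.eq_empty_or_nonempty with rfl | ⟨G₀, hG₀⟩
  · simp
  obtain ⟨u, -⟩ := exists_adj_sameSideGraph_of_not_cliqueFree (h𝒢 G₀ hG₀ G₀ hG₀) ∅
  set k := 2 ^ (Fintype.card V - 1)
  have hcardI : #(univ : Finset (Finset V)) = 2 * k := by
    rw [card_univ, Fintype.card_finset, ← pow_succ', Nat.sub_add_cancel
      (Fintype.card_pos_iff.2 ⟨u⟩)]
  have hcard𝒢 : #(𝒢.image (·.edgeFinset)) = #𝒢 :=
    card_image_of_injective _ fun _ _ => edgeFinset_inj.1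
  have key := two_pow_card_mul_card_pow_le (𝒜 := 𝒢.image (·.edgeFinset)) (I := univ)
    (F := fun S => (sameSideGraph S).edgeFinset) (k := k) (by positivity)
    (fun S _ => edgeFinset_subset_edgeFinset.2 le_top)
    (fun e he => card_filter_mem_edgeFinset_sameSideGraph he)
    (image_subset_iff.2 fun G _ => mem_powerset.2 (edgeFinset_subset_edgeFinset.2 le_top))
    (fun S _ => intersecting_trace_edgeFinset_sameSideGraph h𝒢 S)
  rw [hcardI, hcard𝒢, card_edgeFinset_top_eq_card_choose_two] at key
  refine (Nat.pow_le_pow_iff_left (by positivity : k ≠ 0)).1 ?_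
  calc (4 * #𝒢) ^ k = 2 ^ (2 * k) * #𝒢 ^ k := by rw [mul_pow, pow_mul]; norm_num
    _ ≤ 2 ^ ((Fintype.card V).choose 2 * k) := key
    _ = (2 ^ (Fintype.card V).choose 2) ^ k := pow_mul _ _ _

end SimpleGraph

/-- If every two members of a family `𝓖` of graphs on vertex set `[n]` share a common
triangle, then `|𝓖| ≤ 2^{C(n,2)-2}`. -/
theorem triangle_intersecting_family (n : ℕ) (𝓖 : Finset (SimpleGraph (Fin n)))
    (htri : ∀ G₁ ∈ 𝓖, ∀ G₂ ∈ 𝓖, ∃ i j k : Fin n,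
      i ≠ j ∧ i ≠ k ∧ j ≠ k ∧
      (G₁ ⊓ G₂).Adj i j ∧ (G₁ ⊓ G₂).Adj i k ∧ (G₁ ⊓ G₂).Adj j k) :
    𝓖.card ≤ 2 ^ (n.choose 2 - 2) := by
  have h4 := SimpleGraph.four_mul_card_le_of_forall_not_cliqueFree 𝓖 fun G₁ h₁ G₂ h₂ hfree => by
    obtain ⟨i, j, k, -, -, -, hij, hik, hjk⟩ := htri G₁ h₁ G₂ h₂
    exact hfree {i, j, k} (SimpleGraph.is3Clique_triple_iff.2 ⟨hij, hik, hjk⟩)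
  rw [Fintype.card_fin] at h4
  obtain hm | hm := lt_or_ge (n.choose 2) 2
  · have : 2 ^ n.choose 2 ≤ 2 ^ 1 := Nat.pow_le_pow_right two_pos (by omega)
    have h𝓖 : 𝓖.card = 0 := by omega
    simp [h𝓖]
  · rw [← Nat.sub_add_cancel hm, pow_add] at h4
    omega
end
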